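/- Let G be a finite group with |G| > 1. Then 𝒫(G) is K_{1,2}-free (contains no path on three vertices, i.e. no vertex has two distinct neighbours) if and only if G is a p-group for some prime p, or G is cyclic of order p·q for two distinct primes p, q. -/

import Mathlib

/-!
A vertex of prime order `q` in `𝒫(G)` is adjacent to every nontrivial subgroup of order prime
to `q`, so in a `K_{1,2}`-free graph there is at most one such subgroup. If two primes `p ≠ q`
divide `|G|`, the only nontrivial subgroup of order prime to `q` is therefore one of order `p`:
this excludes subgroups of order `p²` and of any third prime order, so `|G| = pq`, and it makes
the subgroup of order `p` characteristic. Symmetrically for `q`, and two commuting elements of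
orders `p` and `q` generate `G`. Conversely, in a `p`-group no two nontrivial orders are coprime,
and a cyclic group of order `pq` has exactly two proper nontrivial subgroups.
-/

open SimpleGraph

/-- The coprime graph of subgroups of a group `G`: vertices are the proper nontrivial
subgroups of `G`, and two distinct vertices are adjacent iff their orders are coprime. -/
def coprimeGraph (G : Type*) [Group G] :
    SimpleGraph {H : Subgroup G // H ≠ ⊥ ∧ H ≠ ⊤} where
  Adj H K := H ≠ K ∧ Nat.Coprime (Nat.card H.1) (Nat.card K.1)
  symm := ⟨fun _ _ h => ⟨h.1.symm, h.2.symm⟩⟩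
  loopless := ⟨fun _ h => h.1 rfl⟩

theorem SimpleGraph.not_exists_injective_hom_K12_iff {V : Type*} (Γ : SimpleGraph V) :
    (¬ ∃ f : completeBipartiteGraph (Fin 1) (Fin 2) →g Γ, Function.Injective f) ↔
      ∀ a b c, Γ.Adj a b → Γ.Adj a c → b = c := by
  refine ⟨fun hfree a b c hab hac => by_contra fun hbc => hfree ?_, fun h ⟨f, hf⟩ => ?_⟩
  · refine ⟨⟨Sum.elim (fun _ => a) ![b, c], ?_⟩, ?_⟩
    · rintro (i | i) (j | j) hij <;> fin_cases i <;> fin_cases j <;> simp_all [Γ.adj_comm]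
    · rintro (i | i) (j | j) hij <;> fin_cases i <;> fin_cases j <;>
        simp_all [hab.ne, hac.ne, hab.ne.symm, hac.ne.symm, Ne.symm hbc]
  · have hbc := h (f (.inl 0)) (f (.inr 0)) (f (.inr 1))
      (f.map_rel (by simp)) (f.map_rel (by simp))
    exact absurd (hf hbc) (by simp)

namespace Subgroup

variable {G : Type*} [Group G]

theorem exists_card_eq_prime [Finite G] {p : ℕ} (hp : p.Prime) (hpG : p ∣ Nat.card G) :
    ∃ P : Subgroup G, Nat.card P = p := by
  have := Fact.mk hp
  simpa using Sylow.exists_subgroup_card_pow_prime p (n := 1) (by rwa [pow_one])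

theorem ne_top_of_coprime_card {H K : Subgroup G} (hK : K ≠ ⊥)
    (h : Nat.Coprime (Nat.card H) (Nat.card K)) : H ≠ ⊤ := by
  rintro rfl
  rw [card_top] at h
  exact hK (card_eq_one.mp (h.symm.eq_one_of_dvd K.card_subgroup_dvd_card))

theorem characteristic_of_forall_card_eq {H : Subgroup G}
    (h : ∀ K : Subgroup G, Nat.card K = Nat.card H → K = H) : H.Characteristic :=
  characteristic_iff_map_eq.mpr fun φ => h _ (card_map_of_injective φ.injective)

theorem eq_of_card_eq_of_isCyclic [Finite G] [IsCyclic G] {H K : Subgroup G}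
    (h : Nat.card H = Nat.card K) : H = K := by
  classical
  have := Fintype.ofFinite G
  suffices key : ∀ A B : Subgroup G, Nat.card A = Nat.card B → A ≤ B from
    le_antisymm (key H K h) (key K H h.symm)
  intro A B hAB
  have hB : (B : Set G).toFinset = ({x | x ^ Nat.card B = 1} : Finset G) := by
    refine Finset.eq_of_subset_of_card_le (fun x hx => ?_) ?_
    · rw [Set.mem_toFinset] at hx
      simpa [← orderOf_dvd_iff_pow_eq_one] using B.orderOf_dvd_natCard hx
    · rw [Set.toFinset_card, ← Nat.card_eq_fintype_card]
      exact IsCyclic.card_pow_eq_one_le Nat.card_pos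
  intro x hx
  have hxB : x ∈ (B : Set G).toFinset := by
    rw [hB, ← hAB]
    simpa [← orderOf_dvd_iff_pow_eq_one] using A.orderOf_dvd_natCard hx
  exact Set.mem_toFinset.mp hxB

theorem card_eq_or_eq_of_card_eq_mul [Finite G] {p q : ℕ}
    (hp : p.Prime) (hq : q.Prime) (hG : Nat.card G = p * q) {H : Subgroup G} (hH : H ≠ ⊥)
    (hH' : H ≠ ⊤) : Nat.card H = p ∨ Nat.card H = q := by
  obtain ⟨a, b, ha, hb, hab⟩ := Nat.dvd_mul.mp (hG ▸ H.card_subgroup_dvd_card)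
  rcases (Nat.dvd_prime hp).mp ha with rfl | rfl <;>
    rcases (Nat.dvd_prime hq).mp hb with rfl | rfl
  · exact absurd (card_eq_one.mp (by simpa using hab.symm)) hH
  · exact .inr (by simpa using hab.symm)
  · exact .inl (by simpa using hab.symm)
  · exact absurd (H.eq_top_of_card_eq (hab.symm.trans hG.symm)) hH'

end Subgroup

theorem isCyclic_of_normal_zpowers {G : Type*} [Group G] [Finite G] {x y : G}
    (hx : (Subgroup.zpowers x).Normal) (hy : (Subgroup.zpowers y).Normal)
    (hxy : Nat.Coprime (orderOf x) (orderOf y)) (hG : orderOf x * orderOf y = Nat.card G) :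
    IsCyclic G := by
  have hdisj : Disjoint (Subgroup.zpowers x) (Subgroup.zpowers y) :=
    Subgroup.disjoint_of_coprime_natCard (by simpa using hxy)
  have hcomm := Subgroup.commute_of_normal_of_disjoint _ _ hx hy hdisj x y
    (Subgroup.mem_zpowers x) (Subgroup.mem_zpowers y)
  exact isCyclic_of_orderOf_eq_card (x * y)
    (by rw [hcomm.orderOf_mul_eq_mul_orderOf_of_coprime hxy, hG])

theorem exists_isPGroup_of_prime_dvd_card_unique {G : Type*} [Group G] [Finite G]
    (h : ∀ p q, p.Prime → q.Prime → p ∣ Nat.card G → q ∣ Nat.card G → p = q) :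
    ∃ p, p.Prime ∧ IsPGroup p G := by
  by_cases hG : Nat.card G = 1
  · exact ⟨2, Nat.prime_two, IsPGroup.of_card (n := 0) hG⟩
  · obtain ⟨p, hp, hpG⟩ := Nat.exists_prime_and_dvd hG
    exact ⟨p, hp, IsPGroup.of_card (Nat.eq_prime_pow_of_unique_prime_dvd Nat.card_pos.ne'
      fun hd hdG => h _ _ hd hp hdG hpG)⟩

namespace coprimeGraph

variable {G : Type*} [Group G]

theorem adj_of_coprime_card {H K : Subgroup G} (hH : H ≠ ⊥) (hK : K ≠ ⊥)
    (h : Nat.Coprime (Nat.card H) (Nat.card K)) :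
    (coprimeGraph G).Adj ⟨H, hH, Subgroup.ne_top_of_coprime_card hK h⟩
      ⟨K, hK, Subgroup.ne_top_of_coprime_card hH h.symm⟩ := by
  refine ⟨fun hHK => ?_, h⟩
  obtain rfl : H = K := congrArg Subtype.val hHK
  exact hH (Subgroup.card_eq_one.mp (h.eq_one_of_dvd dvd_rfl))

theorem eq_of_coprime_card_of_coprime_card
    (hfree : ∀ a b c, (coprimeGraph G).Adj a b → (coprimeGraph G).Adj a c → b = c)
    {A B C : Subgroup G} (hA : A ≠ ⊥) (hB : B ≠ ⊥) (hC : C ≠ ⊥)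
    (hAB : Nat.Coprime (Nat.card A) (Nat.card B)) (hAC : Nat.Coprime (Nat.card A) (Nat.card C)) :
    B = C :=
  congrArg Subtype.val (hfree _ _ _ (adj_of_coprime_card hA hB hAB) (adj_of_coprime_card hA hC hAC))

variable [Finite G]

theorem eq_of_not_dvd_card
    (hfree : ∀ a b c, (coprimeGraph G).Adj a b → (coprimeGraph G).Adj a c → b = c)
    {q : ℕ} (hq : q.Prime) (hqG : q ∣ Nat.card G) {H K : Subgroup G}
    (hH : H ≠ ⊥) (hK : K ≠ ⊥)
    (hHq : ¬ q ∣ Nat.card H) (hKq : ¬ q ∣ Nat.card K) : H = K := by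
  obtain ⟨Q, hQ⟩ := Subgroup.exists_card_eq_prime hq hqG
  exact eq_of_coprime_card_of_coprime_card hfree
    (Q.one_lt_card_iff_ne_bot.mp (hQ ▸ hq.one_lt)) hH hK
    (hQ ▸ hq.coprime_iff_not_dvd.mpr hHq) (hQ ▸ hq.coprime_iff_not_dvd.mpr hKq)


theorem card_eq_of_not_dvd_card
    (hfree : ∀ a b c, (coprimeGraph G).Adj a b → (coprimeGraph G).Adj a c → b = c)
    {p q : ℕ} (hp : p.Prime) (hq : q.Prime) (hpq : p ≠ q) (hpG : p ∣ Nat.card G)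
    (hqG : q ∣ Nat.card G) {H : Subgroup G} (hH : H ≠ ⊥) (hHq : ¬ q ∣ Nat.card H) :
    Nat.card H = p := by
  obtain ⟨P, hP⟩ := Subgroup.exists_card_eq_prime hp hpG
  rw [eq_of_not_dvd_card hfree hq hqG hH (P.one_lt_card_iff_ne_bot.mp (hP ▸ hp.one_lt)) hHq
    (hP ▸ (Nat.prime_dvd_prime_iff_eq hq hp).not.mpr hpq.symm), hP]

theorem prime_pow_eq_or_eq_of_dvd_card
    (hfree : ∀ a b c, (coprimeGraph G).Adj a b → (coprimeGraph G).Adj a c → b = c)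
    {p q : ℕ} (hp : p.Prime) (hq : q.Prime) (hpq : p ≠ q) (hpG : p ∣ Nat.card G)
    (hqG : q ∣ Nat.card G) {r n : ℕ} (hr : r.Prime) (hn : n ≠ 0)
    (hrn : r ^ n ∣ Nat.card G) :
    r ^ n = p ∨ r ^ n = q := by
  have := Fact.mk hr
  obtain ⟨H, hH⟩ := Sylow.exists_subgroup_card_pow_prime r hrn
  have hH_ne : H ≠ ⊥ := H.one_lt_card_iff_ne_bot.mp (hH ▸ Nat.one_lt_pow hn hr.one_lt)
  rw [← hH]
  by_cases hrq : r = q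
  · subst hrq
    refine .inr (card_eq_of_not_dvd_card hfree hq hp hpq.symm hqG hpG hH_ne ?_)
    rw [hH]
    exact fun h => hpq ((Nat.prime_dvd_prime_iff_eq hp hr).mp (hp.dvd_of_dvd_pow h))
  · refine .inl (card_eq_of_not_dvd_card hfree hp hq hpq hpG hqG hH_ne ?_)
    rw [hH]
    exact fun h => hrq ((Nat.prime_dvd_prime_iff_eq hq hr).mp (hq.dvd_of_dvd_pow h)).symm

theorem card_eq_mul_of_prime_dvd_card
    (hfree : ∀ a b c, (coprimeGraph G).Adj a b → (coprimeGraph G).Adj a c → b = c)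
    {p q : ℕ} (hp : p.Prime) (hq : q.Prime) (hpq : p ≠ q) (hpG : p ∣ Nat.card G)
    (hqG : q ∣ Nat.card G) : Nat.card G = p * q := by
  have hsq : Squarefree (Nat.card G) := by
    refine Nat.squarefree_iff_prime_squarefree.mpr fun r hr hrr => ?_
    rw [← pow_two] at hrr
    rcases prime_pow_eq_or_eq_of_dvd_card hfree hp hq hpq hpG hqG hr
      two_ne_zero hrr with h | h
    · exact Nat.Prime.not_prime_pow le_rfl (h ▸ hp)
    · exact Nat.Prime.not_prime_pow le_rfl (h ▸ hq)
  have hfac : (Nat.card G).primeFactors = {p, q} := by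
    ext r
    simp only [Nat.mem_primeFactors_of_ne_zero Nat.card_pos.ne', Finset.mem_insert,
      Finset.mem_singleton]
    constructor
    · rintro ⟨hr, hrG⟩
      simpa using prime_pow_eq_or_eq_of_dvd_card hfree hp hq hpq hpG hqG hr one_ne_zero
        (by rwa [pow_one])
    · rintro (rfl | rfl)
      exacts [⟨hp, hpG⟩, ⟨hq, hqG⟩]
  rw [← Nat.prod_primeFactors_of_squarefree hsq, hfac, Finset.prod_pair hpq]

theorem characteristic_of_card_eq_prime
    (hfree : ∀ a b c, (coprimeGraph G).Adj a b → (coprimeGraph G).Adj a c → b = c)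
    {p q : ℕ} (hp : p.Prime) (hq : q.Prime) (hpq : p ≠ q) (hqG : q ∣ Nat.card G)
    {P : Subgroup G} (hP : Nat.card P = p) : P.Characteristic := by
  have hqp : ¬ q ∣ p := (Nat.prime_dvd_prime_iff_eq hq hp).not.mpr hpq.symm
  refine Subgroup.characteristic_of_forall_card_eq fun K hK => ?_
  exact eq_of_not_dvd_card hfree hq hqG (K.one_lt_card_iff_ne_bot.mp (hK ▸ hP ▸ hp.one_lt))
    (P.one_lt_card_iff_ne_bot.mp (hP ▸ hp.one_lt)) (hK ▸ hP ▸ hqp) (hP ▸ hqp)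

theorem isCyclic_of_prime_dvd_card
    (hfree : ∀ a b c, (coprimeGraph G).Adj a b → (coprimeGraph G).Adj a c → b = c)
    {p q : ℕ} (hp : p.Prime) (hq : q.Prime) (hpq : p ≠ q) (hpG : p ∣ Nat.card G)
    (hqG : q ∣ Nat.card G) : IsCyclic G := by
  have := Fact.mk hp
  have := Fact.mk hq
  obtain ⟨x, hx⟩ := exists_prime_orderOf_dvd_card' p hpG
  obtain ⟨y, hy⟩ := exists_prime_orderOf_dvd_card' q hqG
  have := characteristic_of_card_eq_prime hfree hp hq hpq hqG
    (P := Subgroup.zpowers x) (by rw [Nat.card_zpowers, hx])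
  have := characteristic_of_card_eq_prime hfree hq hp hpq.symm hpG
    (P := Subgroup.zpowers y) (by rw [Nat.card_zpowers, hy])
  refine isCyclic_of_normal_zpowers (x := x) (y := y) inferInstance inferInstance ?_ ?_
  · rwa [hx, hy, Nat.coprime_primes hp hq]
  · rw [hx, hy, card_eq_mul_of_prime_dvd_card hfree hp hq hpq hpG hqG]

end coprimeGraph

theorem IsPGroup.coprimeGraph_eq_bot {G : Type*} [Group G] {p : ℕ} [Fact p.Prime]
    (hG : IsPGroup p G) : coprimeGraph G = ⊥ := by
  have hdvd (v : {H : Subgroup G // H ≠ ⊥ ∧ H ≠ ⊤}) : p ∣ Nat.card v.1 :=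
    (hG.to_subgroup v.1).card_eq_or_dvd.resolve_left fun h => v.2.1 (Subgroup.card_eq_one.mp h)
  ext a b
  exact iff_false_intro fun hab =>
    (Fact.out : p.Prime).one_lt.ne' (Nat.eq_one_of_dvd_coprimes hab.2 (hdvd a) (hdvd b))

theorem coprimeGraph.eq_of_adj_of_adj_of_isCyclic {G : Type*} [Group G] [Finite G] [IsCyclic G]
    {p q : ℕ} (hp : p.Prime) (hq : q.Prime) (hG : Nat.card G = p * q)
    (a b c : {H : Subgroup G // H ≠ ⊥ ∧ H ≠ ⊤}) (hab : (coprimeGraph G).Adj a b)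
    (hac : (coprimeGraph G).Adj a c) : b = c := by
  have hcard (v : {H : Subgroup G // H ≠ ⊥ ∧ H ≠ ⊤}) :=
    Subgroup.card_eq_or_eq_of_card_eq_mul hp hq hG v.2.1 v.2.2
  have hinj {u v : {H : Subgroup G // H ≠ ⊥ ∧ H ≠ ⊤}} (h : u ≠ v) :
      Nat.card u.1 ≠ Nat.card v.1 :=
    fun huv => h (Subtype.ext (Subgroup.eq_of_card_eq_of_isCyclic huv))
  by_contra hbc
  have ha := hcard a
  have hb := hcard b
  have hc := hcard c
  have := hinj hab.ne
  have := hinj hac.ne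
  have := hinj hbc
  omega

theorem coprimeGraph_K12_free_iff_general {G : Type*} [Group G] [Finite G] :
    (¬ ∃ f : completeBipartiteGraph (Fin 1) (Fin 2) →g coprimeGraph G,
        Function.Injective f) ↔
      ((∃ p : ℕ, p.Prime ∧ IsPGroup p G) ∨
       (IsCyclic G ∧ ∃ p q : ℕ, p.Prime ∧ q.Prime ∧ p ≠ q ∧ Nat.card G = p * q)) := by
  rw [not_exists_injective_hom_K12_iff]
  constructor
  · intro hfree
    by_cases h : ∀ p q, p.Prime → q.Prime → p ∣ Nat.card G → q ∣ Nat.card G → p = q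
    · exact .inl (exists_isPGroup_of_prime_dvd_card_unique h)
    · push Not at h
      obtain ⟨p, q, hp, hq, hpG, hqG, hpq⟩ := h
      exact .inr ⟨coprimeGraph.isCyclic_of_prime_dvd_card hfree hp hq hpq hpG hqG, p, q, hp, hq,
        hpq, coprimeGraph.card_eq_mul_of_prime_dvd_card hfree hp hq hpq hpG hqG⟩
  · rintro (⟨p, hp, hG⟩ | ⟨_, p, q, hp, hq, -, hG⟩)
    · have := Fact.mk hp
      simp [hG.coprimeGraph_eq_bot]
    · exact coprimeGraph.eq_of_adj_of_adj_of_isCyclic hp hq hG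

theorem coprimeGraph_K12_free_iff {G : Type*} [Group G] [Finite G]
    (hG : 1 < Nat.card G) :
    (¬ ∃ f : completeBipartiteGraph (Fin 1) (Fin 2) →g coprimeGraph G,
        Function.Injective f) ↔
      ((∃ p : ℕ, p.Prime ∧ IsPGroup p G) ∨
       (IsCyclic G ∧ ∃ p q : ℕ, p.Prime ∧ q.Prime ∧ p ≠ q ∧ Nat.card G = p * q)) :=
  coprimeGraph_K12_free_iff_general
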